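/- Let b, c be positive semidefinite n×n complex matrices with b invertible. Then b c = c b if and only if b * c = b^{1/4} c^{1/2} b^{1/4}, where b * c = (c^{1/2} b c^{1/2})^{1/2}. -/

import Mathlib

open ComplexOrder Matrix

variable {n : Type*} [Fintype n] [DecidableEq n]

open scoped Classical in
/-- The positive semidefinite square root (junk value `0` if the input is not PSD). -/
noncomputable def psqrt (A : Matrix n n ℂ) : Matrix n n ℂ :=
  if h : A.PosSemidef then
    h.1.eigenvectorUnitary.1 * diagonal ((↑) ∘ (√·) ∘ h.1.eigenvalues) *
      (star h.1.eigenvectorUnitary : Matrix n n ℂ)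
  else 0

/-- The quantum fidelity product `a * b = (b^(1/2) a b^(1/2))^(1/2)`. -/
noncomputable def fid (a b : Matrix n n ℂ) : Matrix n n ℂ :=
  psqrt (psqrt b * a * psqrt b)

open scoped Classical in
noncomputable def Matrix.PosSemidef.sqrt {A : Matrix n n ℂ} (h : A.PosSemidef) : Matrix n n ℂ :=
    h.1.eigenvectorUnitary.1 * diagonal ((↑) ∘ (√·) ∘ h.1.eigenvalues) *
      (star h.1.eigenvectorUnitary : Matrix n n ℂ)

open scoped MatrixOrder in
lemma Matrix.PosSemidef.sqrt_eq_cfc {A : Matrix n n ℂ} (h : A.PosSemidef) :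
    h.sqrt = CFC.sqrt A := by
  rw [CFC.sqrt_eq_cfc, cfc_nnreal_eq_real _ A h.nonneg, h.1.cfc_eq]
  simp only [IsHermitian.cfc, Matrix.PosSemidef.sqrt]
  congr 3
  ext i
  simp [max_eq_left (h.eigenvalues_nonneg i)]

open scoped MatrixOrder in
lemma Matrix.PosSemidef.posSemidef_sqrt {A : Matrix n n ℂ} (h : A.PosSemidef) :
    h.sqrt.PosSemidef := by
  rw [h.sqrt_eq_cfc]; exact (CFC.sqrt_nonneg A).posSemidef

open scoped MatrixOrder in
lemma Matrix.PosSemidef.sqrt_mul_self {A : Matrix n n ℂ} (h : A.PosSemidef) :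
    h.sqrt * h.sqrt = A := by
  rw [h.sqrt_eq_cfc]; exact CFC.sqrt_mul_sqrt_self A h.nonneg

open scoped MatrixOrder in
lemma Matrix.PosSemidef.eq_sqrt_of_sq_eq {A B : Matrix n n ℂ} (hA : A.PosSemidef)
    (hB : B.PosSemidef) (hAB : A ^ 2 = B) : A = hB.sqrt := by
  rw [hB.sqrt_eq_cfc, ← hAB, CFC.sqrt_sq A hA.nonneg]

set_option linter.unusedSectionVars false in
/-- Trace of `Aᴴ * A` is zero implies `A = 0`. -/
lemma my_trace_zero (A : Matrix n n ℂ) (h : (Aᴴ * A).trace = 0) : A = 0 := by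
  have h1 : (Aᴴ * A).trace = ((∑ i, ∑ j, Complex.normSq (A j i) : ℝ) : ℂ) := by
    simp only [Matrix.trace, Matrix.diag, Matrix.mul_apply, Matrix.conjTranspose_apply]
    push_cast
    congr 1
    ext i
    congr 1
    ext j
    rw [Complex.normSq_eq_conj_mul_self]
    rfl
  rw [h1] at h
  have h2 : ∑ i, ∑ j, Complex.normSq (A j i) = 0 := by exact_mod_cast h
  ext i j
  have := (Finset.sum_eq_zero_iff_of_nonneg (fun i _ => Finset.sum_nonneg
    (fun j _ => Complex.normSq_nonneg (A j i)))).mp h2 j (Finset.mem_univ j)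
  have := (Finset.sum_eq_zero_iff_of_nonneg
    (fun k _ => Complex.normSq_nonneg (A k j))).mp this i (Finset.mem_univ i)
  simpa using Complex.normSq_eq_zero.mp this

/-- If `B` commutes with `S * S` for `S` PSD, then `B` commutes with `S`. -/
lemma my_commute_sqrt {S : Matrix n n ℂ} (hS : S.PosSemidef) (B : Matrix n n ℂ)
    (h : B * (S * S) = (S * S) * B) : B * S = S * B := by
  have hH := hS.1
  set V : Matrix n n ℂ := (Matrix.IsHermitian.eigenvectorUnitary hH : Matrix n n ℂ) with hV
  have h1 : V * star V = 1 :=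
    Matrix.mem_unitaryGroup_iff.mp (Matrix.IsHermitian.eigenvectorUnitary hH).2
  have h2 : star V * V = 1 :=
    Matrix.mem_unitaryGroup_iff'.mp (Matrix.IsHermitian.eigenvectorUnitary hH).2
  have e1 : ∀ X : Matrix n n ℂ, V * (star V * X) = X := fun X => by
    rw [← mul_assoc, h1, one_mul]
  have e2 : ∀ X : Matrix n n ℂ, star V * (V * X) = X := fun X => by
    rw [← mul_assoc, h2, one_mul]
  set D : Matrix n n ℂ := Matrix.diagonal (RCLike.ofReal ∘ hH.eigenvalues) with hD
  have hspec : S = V * D * star V := hH.spectral_theorem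
  have hSS : S * S = V * (D * D) * star V := by
    rw [hspec]
    simp only [mul_assoc, e1, e2, h1, h2, mul_one, one_mul]
  set C : Matrix n n ℂ := star V * B * V with hC
  have key : C * (D * D) = (D * D) * C := by
    have h' : B * (V * (D * D) * star V) = V * (D * D) * star V * B := by
      rw [← hSS]; exact h
    have := congrArg (fun M => star V * M * V) h'
    simp only [mul_assoc, e1, e2, h1, h2, mul_one, one_mul] at this
    simp only [hC, mul_assoc]
    exact this
  have hCD : C * D = D * C := by
    ext i j
    have hk := congrFun (congrFun key i) j
    simp only [hD, Matrix.diagonal_mul_diagonal, Matrix.mul_diagonal, Matrix.diagonal_mul,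
      Pi.mul_apply, Function.comp_apply] at hk
    simp only [hD, Matrix.mul_diagonal, Matrix.diagonal_mul, Function.comp_apply]
    by_cases hij : hH.eigenvalues i = hH.eigenvalues j
    · rw [hij, mul_comm]
    · have hne : (RCLike.ofReal (hH.eigenvalues j) : ℂ) * RCLike.ofReal (hH.eigenvalues j)
          - RCLike.ofReal (hH.eigenvalues i) * RCLike.ofReal (hH.eigenvalues i) ≠ 0 := by
        rw [sub_ne_zero]
        intro hcon
        apply hij
        have : (hH.eigenvalues j) * (hH.eigenvalues j)
            = (hH.eigenvalues i) * (hH.eigenvalues i) := by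
          exact_mod_cast hcon
        have hi := hS.eigenvalues_nonneg i
        have hj := hS.eigenvalues_nonneg j
        nlinarith
      have hzero : C i j = 0 := by
        have : C i j * ((RCLike.ofReal (hH.eigenvalues j) : ℂ) * RCLike.ofReal (hH.eigenvalues j)
            - RCLike.ofReal (hH.eigenvalues i) * RCLike.ofReal (hH.eigenvalues i)) = 0 := by
          rw [mul_sub, hk]; ring
        exact (mul_eq_zero.mp this).resolve_right hne
      rw [hzero, mul_zero, zero_mul]
  have hB : B = V * C * star V := by
    simp only [hC, mul_assoc, e1, e2, h1, h2, mul_one, one_mul]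
  rw [hB, hspec]
  have := congrArg (fun M => V * (M * star V)) hCD
  simp only [mul_assoc] at this ⊢
  simp only [e1, e2, h1, h2, mul_one, one_mul]
  exact this

theorem stmt13 (b c : Matrix n n ℂ) (hb : b.PosSemidef) (hc : c.PosSemidef)
    (hbu : IsUnit b) :
    b * c = c * b ↔ fid b c = psqrt (psqrt b) * psqrt c * psqrt (psqrt b) := by
  have hsb : psqrt b = hb.sqrt := dif_pos hb
  have hsbp : (hb.sqrt).PosSemidef := hb.posSemidef_sqrt
  have hs4 : psqrt (psqrt b) = hsbp.sqrt := by rw [hsb]; exact dif_pos hsbp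
  have hsc : psqrt c = hc.sqrt := dif_pos hc
  set s : Matrix n n ℂ := hsbp.sqrt with hsdef
  set t : Matrix n n ℂ := hc.sqrt with htdef
  set w : Matrix n n ℂ := hb.sqrt with hwdef
  have hs : s.PosSemidef := hsbp.posSemidef_sqrt
  have ht : t.PosSemidef := hc.posSemidef_sqrt
  have hwp : w.PosSemidef := hsbp
  have hss : s * s = w := hsbp.sqrt_mul_self
  have hww : w * w = b := hb.sqrt_mul_self
  have htt : t * t = c := hc.sqrt_mul_self
  have hpsd : (t * b * t).PosSemidef := by
    have := hb.mul_mul_conjTranspose_same t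
    rwa [ht.1.eq] at this
  have hfid : fid b c = hpsd.sqrt := by
    unfold fid
    rw [hsc]
    exact dif_pos hpsd
  have hsts : (s * t * s).PosSemidef := by
    have := ht.mul_mul_conjTranspose_same s
    rwa [hs.1.eq] at this
  rw [hfid, hs4, hsc]
  constructor
  · intro hbc
    -- `c` commutes with `w`
    have hcw : c * w = w * c := my_commute_sqrt hsbp c (by rw [hww]; exact hbc.symm)
    -- `w` commutes with `t`
    have hwt : w * t = t * w := my_commute_sqrt hc.posSemidef_sqrt w (by rw [htt]; exact hcw.symm)
    -- `t` commutes with `s`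
    have hts : t * s = s * t := my_commute_sqrt hsbp.posSemidef_sqrt t (by rw [hss]; exact hwt.symm)
    have hA : s * t * s = s * s * t := by rw [mul_assoc, hts, ← mul_assoc]
    have hB : s * t * s = t * (s * s) := by rw [← hts, mul_assoc]
    have key : (s * t * s) * (s * t * s) = t * ((s * s) * (s * s)) * t := by
      nth_rewrite 1 [hB]
      nth_rewrite 1 [hA]
      simp only [mul_assoc]
    have key2 : (s * t * s) ^ 2 = t * b * t := by
      rw [sq, key, hss, hww]
    exact (hsts.eq_sqrt_of_sq_eq hpsd key2).symm
  · intro heq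
    have hsq : (s * t * s) * (s * t * s) = t * b * t := by
      rw [← heq, hpsd.sqrt_mul_self]
    -- trace identity
    have hL : ((w * t) * (w * t)).trace = (t * b * t).trace := by
      rw [← hsq, ← hss]
      calc ((s * s * t) * (s * s * t)).trace
          = (s * ((s * t * (s * s)) * t)).trace := by simp only [mul_assoc]
        _ = (((s * t * (s * s)) * t) * s).trace := Matrix.trace_mul_comm _ _
        _ = ((s * t * s) * (s * t * s)).trace := by simp only [mul_assoc]
    have hconj : (w * t)ᴴ * (w * t) = t * b * t := by
      rw [Matrix.conjTranspose_mul, ht.1.eq, hwp.1.eq, ← hww]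
      simp only [mul_assoc]
    have htr : ((w * t) * (w * t)).trace = ((w * t)ᴴ * (w * t)).trace := by
      rw [hconj, hL]
    -- X := w*t - t*w
    set X : Matrix n n ℂ := w * t - t * w with hX
    have hXc : Xᴴ = t * w - w * t := by
      rw [hX, Matrix.conjTranspose_sub, Matrix.conjTranspose_mul, Matrix.conjTranspose_mul,
        ht.1.eq, hwp.1.eq]
    have c1 : ((t * w) * (t * w)).trace = ((w * t) * (w * t)).trace := by
      calc ((t * w) * (t * w)).trace
          = (t * (w * t * w)).trace := by simp only [mul_assoc]
        _ = ((w * t * w) * t).trace := Matrix.trace_mul_comm _ _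
        _ = ((w * t) * (w * t)).trace := by simp only [mul_assoc]
    have c2 : ((w * t) * (t * w)).trace = ((t * w) * (w * t)).trace := by
      calc ((w * t) * (t * w)).trace
          = ((w * (t * t)) * w).trace := by simp only [mul_assoc]
        _ = (w * (w * (t * t))).trace := Matrix.trace_mul_comm _ _
        _ = ((w * w) * (t * t)).trace := by simp only [mul_assoc]
        _ = ((t * t) * (w * w)).trace := Matrix.trace_mul_comm _ _
        _ = (t * (t * w * w)).trace := by simp only [mul_assoc]
        _ = ((t * w * w) * t).trace := (Matrix.trace_mul_comm _ _).symm
        _ = ((t * w) * (w * t)).trace := by simp only [mul_assoc]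
    have hzero : (Xᴴ * X).trace = 0 := by
      rw [hXc, hX]
      simp only [Matrix.sub_mul, Matrix.mul_sub, Matrix.trace_sub]
      have e1 : ((t * w) * (w * t)).trace = ((w * t)ᴴ * (w * t)).trace := by
        rw [Matrix.conjTranspose_mul, ht.1.eq, hwp.1.eq]
      rw [e1, c1, c2, e1, ← htr]
      ring
    have hX0 : X = 0 := my_trace_zero X hzero
    have hwt : w * t = t * w := by
      have := sub_eq_zero.mp hX0
      exact this
    have hcwt : Commute w t := hwt
    have hbig : Commute (w * w) (t * t) :=
      (hcwt.mul_left hcwt).mul_right (hcwt.mul_left hcwt)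
    rw [← hww, ← htt]
    exact hbig
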